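/- For 0 ≤ ρ₂ < ρ₁, σ > 0 and n ≥ 1, the function y ↦ (σ²/(ρ₁² − ρ₂²))(F_{χ²_n(ρ₂²/σ²)}(y) − F_{χ²_n(ρ₁²/σ²)}(y)), defined for y > 0, is a probability density function: it is nonnegative and integrates to 1 over (0, ∞). -/

import Mathlib

/-!
The noncentral law is the Poisson(λ/2) mixture of the central laws χ²_{n+2i}, so
F_{χ²_n(λ)} = ∑ᵢ wᵢ(λ/2) F_{χ²_{n+2i}}. Since F_{χ²_k} - F_{χ²_{k+2}} = 2 f_{χ²_{k+2}} ≥ 0, the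
sequence i ↦ F_{χ²_{n+2i}}(y) is antitone, and Poisson(s) = Poisson(r) ∗ Poisson(s - r) for r ≤ s
turns this into monotonicity in λ: the difference of CDFs is nonnegative. For the integral,
∫₀^∞ (1 - F) is the mean (Fubini), and t f_{χ²_k}(t) = k f_{χ²_{k+2}}(t) gives mean k for χ²_k,
hence n + λ for χ²_n(λ). So ∫₀^∞ (F_{χ²_n(λ₂)} - F_{χ²_n(λ₁)}) = λ₁ - λ₂ = (ρ₁² - ρ₂²)/σ².
-/

/-- Central chi-square density with `k` degrees of freedom. -/
noncomputable def chiSqPdf (k : ℕ) (y : ℝ) : ℝ :=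
  y ^ ((k : ℝ) / 2 - 1) * Real.exp (-y / 2) / (2 ^ ((k : ℝ) / 2) * Real.Gamma ((k : ℝ) / 2))

/-- Noncentral chi-square density (Poisson-weighted mixture of central chi-square densities). -/
noncomputable def ncChiSqPdf (n : ℕ) (lam y : ℝ) : ℝ :=
  ∑' i : ℕ, Real.exp (-lam / 2) * (lam / 2) ^ i / i.factorial * chiSqPdf (n + 2 * i) y

/-- Noncentral chi-square CDF. -/
noncomputable def ncChiSqCdf (n : ℕ) (lam y : ℝ) : ℝ :=
  ∫ t in Set.Ioc (0 : ℝ) y, ncChiSqPdf n lam t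

open MeasureTheory ProbabilityTheory Real Set
open scoped NNReal Nat

theorem integral_Ioi_integral_Ioi {f : ℝ → ℝ} (hf : IntegrableOn f (Ioi 0))
    (hf' : IntegrableOn (fun t ↦ t * f t) (Ioi 0)) :
    IntegrableOn (fun y ↦ ∫ t in Ioi y, f t) (Ioi 0) ∧
      ∫ y in Ioi 0, ∫ t in Ioi y, f t = ∫ t in Ioi 0, t * f t := by
  set μ := volume.restrict (Ioi (0 : ℝ))
  set F : (ℝ → ℝ) → ℝ × ℝ → ℝ := fun g ↦ {p | p.1 < p.2}.indicator fun p ↦ g p.2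
  have hF_fst : ∀ y ∈ Ioi (0 : ℝ), ∫ t, F f (y, t) ∂μ = ∫ t in Ioi y, f t := by
    intro y hy
    have : (fun t ↦ F f (y, t)) = (Ioi y).indicator f := by
      ext t; simp [F, indicator, mem_Ioi]
    rw [this, integral_indicator measurableSet_Ioi, Measure.restrict_restrict measurableSet_Ioi,
      inter_eq_left.2 (Ioi_subset_Ioi hy.le)]
  have hF_snd : ∀ g t, (fun y ↦ F g (y, t)) = (Iio t).indicator fun _ ↦ g t := by
    intro g t
    ext y; simp [F, indicator, mem_Iio]
  have hμ : ∀ t ∈ Ioi (0 : ℝ), μ.real (Iio t) = t := by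
    intro t ht
    rw [measureReal_restrict_apply measurableSet_Iio, Iio_inter_Ioi,
      Real.volume_real_Ioo_of_le ht.le, sub_zero]
  have hF_int : Integrable (F f) (μ.prod μ) := by
    have hF_meas : AEStronglyMeasurable (F f) (μ.prod μ) :=
      hf.aestronglyMeasurable.comp_snd.indicator (measurableSet_lt measurable_fst measurable_snd)
    refine (integrable_prod_iff' hF_meas).2 ⟨.of_forall fun t ↦ ?_, ?_⟩
    · rw [hF_snd]
      exact (integrable_indicator_iff measurableSet_Iio).2
        (integrableOn_const (by simp [μ, Iio_inter_Ioi]))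
    · refine IntegrableOn.congr_fun hf'.norm (fun t ht ↦ ?_) measurableSet_Ioi
      have : (fun y ↦ ‖F f (y, t)‖) = fun y ↦ F (‖f ·‖) (y, t) := by
        ext y; simp [F, norm_indicator_eq_indicator_norm]
      rw [this, hF_snd (‖f ·‖) t, integral_indicator_const _ measurableSet_Iio, hμ t ht,
        smul_eq_mul, norm_mul, Real.norm_of_nonneg ht.le]
  refine ⟨IntegrableOn.congr_fun hF_int.integral_prod_left hF_fst measurableSet_Ioi, ?_⟩
  calc ∫ y in Ioi 0, ∫ t in Ioi y, f t = ∫ y, ∫ t, F f (y, t) ∂μ ∂μ :=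
        (setIntegral_congr_fun measurableSet_Ioi hF_fst).symm
    _ = ∫ t, ∫ y, F f (y, t) ∂μ ∂μ := integral_integral_swap hF_int
    _ = ∫ t in Ioi 0, t * f t := by
        refine setIntegral_congr_fun measurableSet_Ioi fun t ht ↦ ?_
        rw [hF_snd f t, integral_indicator_const _ measurableSet_Iio, hμ t ht, smul_eq_mul]

noncomputable def chiSqCdf (k : ℕ) (y : ℝ) : ℝ := ∫ t in Ioc 0 y, chiSqPdf k t

section ChiSquare

variable {k : ℕ}

lemma chiSqPdf_nonneg (k : ℕ) {t : ℝ} (ht : 0 ≤ t) : 0 ≤ chiSqPdf k t := by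
  unfold chiSqPdf
  positivity

lemma chiSqPdf_eq_mul_rpow_mul_exp (k : ℕ) (t : ℝ) : chiSqPdf k t =
    (2 ^ ((k : ℝ) / 2) * Gamma ((k : ℝ) / 2))⁻¹ * (t ^ ((k : ℝ) / 2 - 1) * exp (-(1 / 2 * t))) := by
  rw [chiSqPdf]
  ring_nf

lemma integrableOn_chiSqPdf (hk : 0 < k) : IntegrableOn (chiSqPdf k) (Ioi 0) := by
  have hk' : (0 : ℝ) < k / 2 := by positivity
  simp_rw [funext (chiSqPdf_eq_mul_rpow_mul_exp k)]
  have h := integrableOn_rpow_mul_exp_neg_mul_rpow (s := (k : ℝ) / 2 - 1) (p := 1) (b := 1 / 2)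
    (by linarith) one_pos one_half_pos
  simp only [rpow_one, neg_mul] at h
  exact h.const_mul _

lemma integral_chiSqPdf (hk : 0 < k) : ∫ t in Ioi 0, chiSqPdf k t = 1 := by
  have hk' : (0 : ℝ) < k / 2 := by positivity
  simp_rw [chiSqPdf_eq_mul_rpow_mul_exp k, integral_const_mul,
    integral_rpow_mul_exp_neg_mul_Ioi hk' one_half_pos, one_div_one_div]
  have := Gamma_pos_of_pos hk'
  field_simp

lemma mul_chiSqPdf (hk : 0 < k) {t : ℝ} (ht : 0 < t) :
    t * chiSqPdf k t = k * chiSqPdf (k + 2) t := by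
  have hk' : (0 : ℝ) < k / 2 := by positivity
  have := Gamma_pos_of_pos hk'
  have hexp : ((k + 2 : ℕ) : ℝ) / 2 - 1 = (k / 2 - 1) + 1 := by push_cast; ring
  have hhalf : ((k + 2 : ℕ) : ℝ) / 2 = k / 2 + 1 := by push_cast; ring
  rw [chiSqPdf, chiSqPdf, hexp, hhalf, Gamma_add_one hk'.ne', rpow_add_one two_ne_zero,
    rpow_add_one ht.ne']
  field_simp

lemma integrableOn_mul_chiSqPdf (hk : 0 < k) : IntegrableOn (fun t ↦ t * chiSqPdf k t) (Ioi 0) :=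
  IntegrableOn.congr_fun ((integrableOn_chiSqPdf (by omega : 0 < k + 2)).const_mul (k : ℝ))
    (fun _ ht ↦ (mul_chiSqPdf hk ht).symm) measurableSet_Ioi

lemma integral_mul_chiSqPdf (hk : 0 < k) : ∫ t in Ioi 0, t * chiSqPdf k t = k := by
  rw [setIntegral_congr_fun measurableSet_Ioi fun _ ht ↦ mul_chiSqPdf hk ht, integral_const_mul,
    integral_chiSqPdf (by omega), mul_one]

lemma hasDerivAt_chiSqPdf (k : ℕ) {t : ℝ} (ht : 0 < t) :
    HasDerivAt (chiSqPdf k) ((((k : ℝ) / 2 - 1) / t - 1 / 2) * chiSqPdf k t) t := by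
  have hpow := hasDerivAt_rpow_const (p := (k : ℝ) / 2 - 1) (Or.inl ht.ne')
  have hexp : HasDerivAt (fun s ↦ exp (-s / 2)) (exp (-t / 2) * (-1 / 2)) t := by
    simpa using ((hasDerivAt_id t).neg.div_const 2).exp
  have h : HasDerivAt (chiSqPdf k) _ t :=
    (hpow.mul hexp).div_const (2 ^ ((k : ℝ) / 2) * Gamma ((k : ℝ) / 2))
  refine h.congr_deriv ?_
  rw [chiSqPdf, rpow_sub_one ht.ne', rpow_sub_one ht.ne']
  field_simp
  ring

lemma hasDerivAt_chiSqPdf_add_two (hk : 0 < k) {t : ℝ} (ht : 0 < t) :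
    HasDerivAt (chiSqPdf (k + 2)) ((chiSqPdf k t - chiSqPdf (k + 2) t) / 2) t := by
  convert hasDerivAt_chiSqPdf (k + 2) ht using 1
  have := mul_chiSqPdf hk ht
  push_cast
  field_simp
  linear_combination this

lemma chiSqCdf_nonneg (k : ℕ) (y : ℝ) : 0 ≤ chiSqCdf k y :=
  setIntegral_nonneg measurableSet_Ioc fun _ ht ↦ chiSqPdf_nonneg k ht.1.le

lemma chiSqCdf_le_one (hk : 0 < k) (y : ℝ) : chiSqCdf k y ≤ 1 := by
  rw [← integral_chiSqPdf hk]
  exact setIntegral_mono_set (integrableOn_chiSqPdf hk)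
    ((ae_restrict_iff' measurableSet_Ioi).2 (.of_forall fun _ ht ↦ chiSqPdf_nonneg k ht.le))
    Ioc_subset_Ioi_self.eventuallyLE

lemma chiSqCdf_sub_chiSqCdf_add_two (hk : 0 < k) {y : ℝ} (hy : 0 ≤ y) :
    chiSqCdf k y - chiSqCdf (k + 2) y = 2 * chiSqPdf (k + 2) y := by
  have hint : ∀ j, 0 < j → IntegrableOn (chiSqPdf j) (Ioc 0 y) :=
    fun j hj ↦ (integrableOn_chiSqPdf hj).mono_set Ioc_subset_Ioi_self
  have hexp : ((k + 2 : ℕ) : ℝ) / 2 - 1 = k / 2 := by push_cast; ring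
  have hcont : ContinuousOn (chiSqPdf (k + 2)) (Icc 0 y) :=
    ((continuousOn_id.rpow_const fun _ _ ↦ Or.inr (by rw [hexp]; positivity)).mul
      (by fun_prop)).div_const _
  have hzero : chiSqPdf (k + 2) 0 = 0 := by
    rw [chiSqPdf, hexp, zero_rpow (by positivity), zero_mul, zero_div]
  have hftc := intervalIntegral.integral_eq_sub_of_hasDerivAt_of_le hy hcont
    (fun t ht ↦ hasDerivAt_chiSqPdf_add_two hk ht.1)
    ((intervalIntegrable_iff_integrableOn_Ioc_of_le hy).2
      (((hint k hk).sub (hint (k + 2) (by omega))).div_const 2))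
  rw [intervalIntegral.integral_of_le hy, integral_div,
    integral_sub (hint k hk) (hint _ (by omega)), hzero, sub_zero] at hftc
  rw [chiSqCdf, chiSqCdf]
  linarith

lemma chiSqCdf_add_two_le (hk : 0 < k) {y : ℝ} (hy : 0 ≤ y) :
    chiSqCdf (k + 2) y ≤ chiSqCdf k y := by
  linarith [chiSqCdf_sub_chiSqCdf_add_two hk hy, chiSqPdf_nonneg (k + 2) hy]

lemma one_sub_chiSqCdf (hk : 0 < k) {y : ℝ} (hy : 0 ≤ y) :
    1 - chiSqCdf k y = ∫ t in Ioi y, chiSqPdf k t := by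
  rw [← integral_chiSqPdf hk, ← Ioc_union_Ioi_eq_Ioi hy, chiSqCdf,
    setIntegral_union (Ioc_disjoint_Ioi le_rfl) measurableSet_Ioi
      ((integrableOn_chiSqPdf hk).mono_set Ioc_subset_Ioi_self)
      ((integrableOn_chiSqPdf hk).mono_set (Ioi_subset_Ioi hy))]
  ring

lemma integrableOn_one_sub_chiSqCdf (hk : 0 < k) :
    IntegrableOn (fun y ↦ 1 - chiSqCdf k y) (Ioi 0) :=
  IntegrableOn.congr_fun (integral_Ioi_integral_Ioi (integrableOn_chiSqPdf hk)
    (integrableOn_mul_chiSqPdf hk)).1 (fun _ hy ↦ (one_sub_chiSqCdf hk hy.le).symm)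
    measurableSet_Ioi

lemma integral_one_sub_chiSqCdf (hk : 0 < k) : ∫ y in Ioi 0, (1 - chiSqCdf k y) = k := by
  rw [setIntegral_congr_fun measurableSet_Ioi fun _ hy ↦ one_sub_chiSqCdf hk hy.le,
    (integral_Ioi_integral_Ioi (integrableOn_chiSqPdf hk) (integrableOn_mul_chiSqPdf hk)).2,
    integral_mul_chiSqPdf hk]

end ChiSquare

noncomputable def poissonWeight (r : ℝ) (i : ℕ) : ℝ := exp (-r) * r ^ i / i !

section Poisson

variable {r : ℝ}

lemma poissonWeight_nonneg (hr : 0 ≤ r) (i : ℕ) : 0 ≤ poissonWeight r i := by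
  unfold poissonWeight
  positivity

lemma hasSum_poissonWeight (r : ℝ) : HasSum (poissonWeight r) 1 := by
  have h := (NormedSpace.expSeries_div_hasSum_exp r).mul_left (exp (-r))
  rw [← exp_eq_exp_ℝ, ← exp_add, neg_add_cancel, exp_zero] at h
  unfold poissonWeight
  simpa only [mul_div_assoc] using h

lemma poissonWeight_succ_mul (r : ℝ) (i : ℕ) :
    poissonWeight r (i + 1) * (i + 1) = r * poissonWeight r i := by
  simp only [poissonWeight, Nat.factorial_succ, pow_succ, Nat.cast_mul, Nat.cast_succ]
  field_simp

lemma hasSum_poissonWeight_mul_self (r : ℝ) : HasSum (fun i ↦ poissonWeight r i * i) r := by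
  rw [← hasSum_nat_add_iff' 1]
  simpa [poissonWeight_succ_mul] using (hasSum_poissonWeight r).mul_left r

lemma tsum_poissonWeight_mul_le_of_antitone {s : ℝ} (hr : 0 ≤ r) (hrs : r ≤ s) {f : ℕ → ℝ}
    (hf : Antitone f) (hf0 : ∀ i, 0 ≤ f i) :
    ∑' i, poissonWeight s i * f i ≤ ∑' i, poissonWeight r i * f i := by
  lift s to ℝ≥0 using hr.trans hrs
  lift r to ℝ≥0 using hr
  obtain ⟨d, rfl⟩ := exists_add_of_le (NNReal.coe_le_coe.1 hrs)
  have hint : ∀ q : ℝ≥0, Integrable f (poissonMeasure q) := fun q ↦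
    Integrable.of_bound (C := f 0) .of_discrete
      (.of_forall fun i ↦ by rw [Real.norm_of_nonneg (hf0 i)]; exact hf (Nat.zero_le i))
  simp only [poissonWeight, ← smul_eq_mul (a := _ / _), ← integral_poissonMeasure]
  rw [← poissonMeasure_conv_poissonMeasure, integral_conv (by
    rw [poissonMeasure_conv_poissonMeasure]; exact hint _)]
  refine integral_mono_of_nonneg (.of_forall fun i ↦ integral_nonneg fun j ↦ hf0 _) (hint r)
    (.of_forall fun i ↦ ?_)
  calc ∫ j, f (i + j) ∂poissonMeasure d
      ≤ ∫ _, f i ∂poissonMeasure d :=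
        integral_mono_of_nonneg (.of_forall fun j ↦ hf0 _) (integrable_const _)
          (.of_forall fun j ↦ hf (Nat.le_add_right i j))
    _ = f i := by simp

end Poisson

section Noncentral

variable {n : ℕ} {lam : ℝ}

lemma ncChiSqPdf_eq_tsum (n : ℕ) (lam t : ℝ) :
    ncChiSqPdf n lam t = ∑' i, poissonWeight (lam / 2) i * chiSqPdf (n + 2 * i) t := by
  simp only [ncChiSqPdf, poissonWeight, neg_div]

lemma summable_poissonWeight_mul_chiSqCdf (hn : 0 < n) (hl : 0 ≤ lam) (y : ℝ) :
    Summable fun i ↦ poissonWeight (lam / 2) i * chiSqCdf (n + 2 * i) y :=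
  (hasSum_poissonWeight _).summable.of_nonneg_of_le
    (fun i ↦ mul_nonneg (poissonWeight_nonneg (by positivity) i) (chiSqCdf_nonneg _ y))
    (fun i ↦ mul_le_of_le_one_right (poissonWeight_nonneg (by positivity) i)
      (chiSqCdf_le_one (by omega) y))

lemma ncChiSqCdf_eq_tsum (hn : 0 < n) (hl : 0 ≤ lam) (y : ℝ) :
    ncChiSqCdf n lam y = ∑' i, poissonWeight (lam / 2) i * chiSqCdf (n + 2 * i) y := by
  have hw := poissonWeight_nonneg (r := lam / 2) (by positivity)
  have hint : ∀ i, IntegrableOn (fun t ↦ poissonWeight (lam / 2) i * chiSqPdf (n + 2 * i) t)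
      (Ioc 0 y) :=
    fun i ↦ ((integrableOn_chiSqPdf (by omega)).mono_set Ioc_subset_Ioi_self).const_mul _
  have hnorm : ∀ i, ∫ t in Ioc 0 y, ‖poissonWeight (lam / 2) i * chiSqPdf (n + 2 * i) t‖ =
      poissonWeight (lam / 2) i * chiSqCdf (n + 2 * i) y := fun i ↦ by
    rw [chiSqCdf, ← integral_const_mul]
    exact setIntegral_congr_fun measurableSet_Ioc fun t ht ↦
      Real.norm_of_nonneg (mul_nonneg (hw i) (chiSqPdf_nonneg _ ht.1.le))
  simp_rw [ncChiSqCdf, ncChiSqPdf_eq_tsum, ← integral_tsum_of_summable_integral_norm hint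
      (by simpa only [hnorm] using summable_poissonWeight_mul_chiSqCdf hn hl y),
    integral_const_mul, chiSqCdf]

lemma ncChiSqCdf_anti (hn : 0 < n) {lam₁ lam₂ : ℝ} (hl₂ : 0 ≤ lam₂) (hl : lam₂ ≤ lam₁) {y : ℝ}
    (hy : 0 ≤ y) : ncChiSqCdf n lam₁ y ≤ ncChiSqCdf n lam₂ y := by
  rw [ncChiSqCdf_eq_tsum hn (hl₂.trans hl), ncChiSqCdf_eq_tsum hn hl₂]
  refine tsum_poissonWeight_mul_le_of_antitone (by positivity) (by linarith)
    (antitone_nat_of_succ_le fun i ↦ ?_) fun i ↦ chiSqCdf_nonneg _ y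
  rw [show n + 2 * (i + 1) = n + 2 * i + 2 by ring]
  exact chiSqCdf_add_two_le (by omega) hy

lemma one_sub_ncChiSqCdf_eq_tsum (hn : 0 < n) (hl : 0 ≤ lam) (y : ℝ) :
    1 - ncChiSqCdf n lam y = ∑' i, poissonWeight (lam / 2) i * (1 - chiSqCdf (n + 2 * i) y) := by
  simp_rw [mul_sub, mul_one]
  rw [(hasSum_poissonWeight _).summable.tsum_sub (summable_poissonWeight_mul_chiSqCdf hn hl y),
    (hasSum_poissonWeight _).tsum_eq, ncChiSqCdf_eq_tsum hn hl]

lemma integral_one_sub_ncChiSqCdf (hn : 0 < n) (hl : 0 ≤ lam) :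
    ∫ y in Ioi 0, (1 - ncChiSqCdf n lam y) = n + lam := by
  have hint : ∀ i, IntegrableOn
      (fun y ↦ poissonWeight (lam / 2) i * (1 - chiSqCdf (n + 2 * i) y)) (Ioi 0) :=
    fun i ↦ (integrableOn_one_sub_chiSqCdf (by omega)).const_mul _
  have hterm : ∀ i, ∫ y in Ioi 0, poissonWeight (lam / 2) i * (1 - chiSqCdf (n + 2 * i) y) =
      poissonWeight (lam / 2) i * (n + 2 * i : ℕ) := fun i ↦ by
    rw [integral_const_mul, integral_one_sub_chiSqCdf (by omega)]
  have hnorm : ∀ i, ∫ y in Ioi 0, ‖poissonWeight (lam / 2) i * (1 - chiSqCdf (n + 2 * i) y)‖ =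
      ∫ y in Ioi 0, poissonWeight (lam / 2) i * (1 - chiSqCdf (n + 2 * i) y) := fun i ↦
    setIntegral_congr_fun measurableSet_Ioi fun y _ ↦ Real.norm_of_nonneg <| mul_nonneg
      (poissonWeight_nonneg (by positivity) i) (sub_nonneg.2 (chiSqCdf_le_one (by omega) y))
  have hmean : HasSum (fun i ↦ poissonWeight (lam / 2) i * (n + 2 * i : ℕ)) (n + lam) := by
    have h := ((hasSum_poissonWeight (lam / 2)).mul_left (n : ℝ)).add
      ((hasSum_poissonWeight_mul_self (lam / 2)).mul_left 2)
    rw [mul_one, mul_div_cancel₀ _ two_ne_zero] at h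
    convert! h using 2 with i
    push_cast
    ring
  rw [setIntegral_congr_fun measurableSet_Ioi fun y _ ↦ one_sub_ncChiSqCdf_eq_tsum hn hl y]
  refine (hasSum_integral_of_summable_integral_norm hint ?_).unique ?_
  · simpa only [hnorm, hterm] using hmean.summable
  · simpa only [hterm] using hmean

lemma integrableOn_one_sub_ncChiSqCdf (hn : 0 < n) (hl : 0 ≤ lam) :
    IntegrableOn (fun y ↦ 1 - ncChiSqCdf n lam y) (Ioi 0) := by
  refine Integrable.of_integral_ne_zero ?_
  rw [integral_one_sub_ncChiSqCdf hn hl]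
  have : (0 : ℝ) < n := by exact_mod_cast hn
  positivity

end Noncentral

theorem cdf_difference_is_pdf (n : ℕ) (hn : 1 ≤ n) (σ ρ₁ ρ₂ : ℝ)
    (hσ : 0 < σ) (hρ₂ : 0 ≤ ρ₂) (hρ : ρ₂ < ρ₁) :
    (∀ y : ℝ, 0 < y →
      0 ≤ (σ ^ 2 / (ρ₁ ^ 2 - ρ₂ ^ 2)) *
        (ncChiSqCdf n (ρ₂ ^ 2 / σ ^ 2) y - ncChiSqCdf n (ρ₁ ^ 2 / σ ^ 2) y)) ∧
    (∫ y in Set.Ioi (0 : ℝ),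
        (σ ^ 2 / (ρ₁ ^ 2 - ρ₂ ^ 2)) *
          (ncChiSqCdf n (ρ₂ ^ 2 / σ ^ 2) y - ncChiSqCdf n (ρ₁ ^ 2 / σ ^ 2) y)) = 1 := by
  have hsq : ρ₂ ^ 2 < ρ₁ ^ 2 := by gcongr
  have hl₂ : 0 ≤ ρ₂ ^ 2 / σ ^ 2 := by positivity
  have hl : ρ₂ ^ 2 / σ ^ 2 ≤ ρ₁ ^ 2 / σ ^ 2 := by gcongr
  have hd : 0 < ρ₁ ^ 2 - ρ₂ ^ 2 := sub_pos.2 hsq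
  have hc : 0 < σ ^ 2 / (ρ₁ ^ 2 - ρ₂ ^ 2) := by positivity
  refine ⟨fun y hy ↦ mul_nonneg hc.le (sub_nonneg.2 (ncChiSqCdf_anti hn hl₂ hl hy.le)), ?_⟩
  calc ∫ y in Ioi 0, σ ^ 2 / (ρ₁ ^ 2 - ρ₂ ^ 2) *
        (ncChiSqCdf n (ρ₂ ^ 2 / σ ^ 2) y - ncChiSqCdf n (ρ₁ ^ 2 / σ ^ 2) y)
      = σ ^ 2 / (ρ₁ ^ 2 - ρ₂ ^ 2) * ∫ y in Ioi 0,
          ((1 - ncChiSqCdf n (ρ₁ ^ 2 / σ ^ 2) y) - (1 - ncChiSqCdf n (ρ₂ ^ 2 / σ ^ 2) y)) := by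
        simp_rw [sub_sub_sub_cancel_left]
        exact integral_const_mul _ _
    _ = σ ^ 2 / (ρ₁ ^ 2 - ρ₂ ^ 2) * ((n + ρ₁ ^ 2 / σ ^ 2) - (n + ρ₂ ^ 2 / σ ^ 2)) := by
        rw [integral_sub (integrableOn_one_sub_ncChiSqCdf hn (hl₂.trans hl))
          (integrableOn_one_sub_ncChiSqCdf hn hl₂), integral_one_sub_ncChiSqCdf hn (hl₂.trans hl),
          integral_one_sub_ncChiSqCdf hn hl₂]
    _ = 1 := by
        field_simp
        ring
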